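/- Suppose (ᾱ, β̄) ≠ (0, 0). Then there exists an RCV solution for (ᾱ, β̄) with θ > 0 if and only if there exist μ > 0 and an extended regular CGLP solution whose (α, β)-component equals (μᾱ, μβ̄). -/

import Mathlib

open Matrix

/-- Rank of the submatrix of `A` with rows indexed by `N`. -/
noncomputable def subRank {q n : ℕ} (A : Matrix (Fin q) (Fin n) ℝ) (N : Finset (Fin q)) : ℕ :=
  (A.submatrix (fun i : {x // x ∈ N} => (i : Fin q)) id).rank

open Classical in
/-- The support `N(u)` of a family of multipliers `u = (u^t)_{t ∈ T}`. -/
noncomputable def supp {q : ℕ} {T : Type} [Fintype T] (u : T → Fin q → ℝ) : Finset (Fin q) :=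
  Finset.univ.filter fun j => ∃ t, 0 < u t j

/-- A CGLP solution for the data `A, b, D, d`. -/
def IsCGLP {q n r : ℕ} {T : Type} [Fintype T]
    (A : Matrix (Fin q) (Fin n) ℝ) (b : Fin q → ℝ)
    (D : T → Matrix (Fin r) (Fin n) ℝ) (d : T → Fin r → ℝ)
    (α : Fin n → ℝ) (β : ℝ) (u : T → Fin q → ℝ) (v : T → Fin r → ℝ) : Prop :=
  (∀ t, α = Matrix.vecMul (u t) A + Matrix.vecMul (v t) (D t)) ∧
  (∀ t, β = u t ⬝ᵥ b + v t ⬝ᵥ d t) ∧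
  (∀ t j, 0 ≤ u t j) ∧ (∀ t i, 0 ≤ v t i) ∧
  (∑ t, (∑ j, u t j + ∑ i, v t i)) = 1

/-- An extended regular CGLP solution: a CGLP solution whose submatrix of `A` on the
rows in the support `N(u)` has full row rank. -/
noncomputable def IsExtReg {q n r : ℕ} {T : Type} [Fintype T]
    (A : Matrix (Fin q) (Fin n) ℝ) (b : Fin q → ℝ)
    (D : T → Matrix (Fin r) (Fin n) ℝ) (d : T → Fin r → ℝ)
    (α : Fin n → ℝ) (β : ℝ) (u : T → Fin q → ℝ) (v : T → Fin r → ℝ) : Prop :=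
  IsCGLP A b D d α β u v ∧ subRank A (supp u) = (supp u).card

/-- An RCV solution for the cut `(ᾱ, β̄)`. -/
def IsRCV {q n r : ℕ} {T : Type} [Fintype T]
    (A : Matrix (Fin q) (Fin n) ℝ) (b : Fin q → ℝ)
    (D : T → Matrix (Fin r) (Fin n) ℝ) (d : T → Fin r → ℝ)
    (αbar : Fin n → ℝ) (βbar : ℝ)
    (θ : ℝ) (δ : Fin q → ℝ) (u : T → Fin q → ℝ) (v : T → Fin r → ℝ) : Prop :=
  0 ≤ θ ∧ θ ≤ 1 ∧ (∀ j, δ j = 0 ∨ δ j = 1) ∧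
  (∀ t j, 0 ≤ u t j) ∧ (∀ t i, 0 ≤ v t i) ∧
  (∀ t, θ • αbar = Matrix.vecMul (u t) A + Matrix.vecMul (v t) (D t)) ∧
  (∀ t, θ * βbar = u t ⬝ᵥ b + v t ⬝ᵥ d t) ∧
  (∀ t j, u t j ≤ δ j) ∧
  (∑ j, δ j) ≤ (n : ℝ) ∧
  (∀ N : Finset (Fin q), ∑ j ∈ N, δ j ≤ (subRank A N : ℝ))

/-! Both directions only rescale the multipliers, which changes neither their support nor the
homogeneous equations. From an RCV solution, dividing by the total mass (positive because
`θ > 0` and `(ᾱ, β̄) ≠ 0`) gives the CGLP normalization; as `u^t ≤ δ` with `δ` binary, `δ = 1`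
on `N(u)`, and the RCV rank constraint on `N(u)` itself forces full row rank. Conversely,
dividing by `max 1 μ` keeps `θ ≤ 1` and `u^t ≤ 1`, and `δ` is the indicator of `N(u)`: the
rows of `Ã` in `N(u) ∩ N` are independent rows of `Ã_N`, so `|N(u) ∩ N| ≤ rank(Ã_N)`. -/

open Finset

section LinearAlgebra

variable {q n : ℕ} (A : Matrix (Fin q) (Fin n) ℝ)

lemma subRank_le_width (N : Finset (Fin q)) : subRank A N ≤ n := by
  simpa [subRank] using (A.submatrix (fun i : N => (i : Fin q)) id).rank_le_card_width

lemma subRank_le_card (N : Finset (Fin q)) : subRank A N ≤ #N := by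
  simpa [subRank] using (A.submatrix (fun i : N => (i : Fin q)) id).rank_le_card_height

lemma linearIndependent_row_of_subRank_eq_card {S : Finset (Fin q)} (hS : subRank A S = #S) :
    LinearIndependent ℝ (A.submatrix (fun i : S => (i : Fin q)) id).row := by
  rw [linearIndependent_iff_card_eq_finrank_span, Fintype.card_coe, hS.symm, subRank,
    Matrix.rank_eq_finrank_span_row]
  rfl

lemma card_inter_le_subRank {S : Finset (Fin q)} (hS : subRank A S = #S) (N : Finset (Fin q)) :
    #(N ∩ S) ≤ subRank A N := by
  have hindep : LinearIndependent ℝ (A.submatrix (fun i : ↥(N ∩ S) => (i : Fin q)) id).row :=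
    (linearIndependent_row_of_subRank_eq_card A hS).comp
      (fun i : ↥(N ∩ S) => (⟨i, (mem_inter.mp i.2).2⟩ : S))
      fun i j h => Subtype.ext (congrArg Subtype.val h :)
  calc #(N ∩ S) = (A.submatrix (fun i : ↥(N ∩ S) => (i : Fin q)) id).rank := by
        rw [hindep.rank_matrix, Fintype.card_coe]
    _ ≤ subRank A N :=
        (A.submatrix (fun i : N => (i : Fin q)) id).rank_submatrix_le
          (fun i : ↥(N ∩ S) => (⟨i, (mem_inter.mp i.2).1⟩ : N)) id

end LinearAlgebra

section Multipliers

variable {q r : ℕ} {T : Type} [Fintype T]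

lemma mem_supp {u : T → Fin q → ℝ} {j : Fin q} : j ∈ supp u ↔ ∃ t, 0 < u t j := by
  simp [supp]

lemma eq_zero_of_notMem_supp {u : T → Fin q → ℝ} (hu : ∀ t j, 0 ≤ u t j) {j : Fin q}
    (hj : j ∉ supp u) (t : T) : u t j = 0 :=
  le_antisymm (not_lt.mp fun h => hj (mem_supp.mpr ⟨t, h⟩)) (hu t j)

lemma supp_smul (u : T → Fin q → ℝ) {c : ℝ} (hc : 0 < c) : supp (c • u) = supp u := by
  ext j
  simp only [mem_supp, Pi.smul_apply, smul_eq_mul, mul_pos_iff_of_pos_left hc]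

def totalMass (u : T → Fin q → ℝ) (v : T → Fin r → ℝ) : ℝ :=
  ∑ t, (∑ j, u t j + ∑ i, v t i)

variable {u : T → Fin q → ℝ} {v : T → Fin r → ℝ}

lemma totalMass_smul (c : ℝ) : totalMass (c • u) (c • v) = c * totalMass u v := by
  simp [totalMass, Finset.mul_sum, mul_add]

lemma sum_add_sum_le_totalMass (hu : ∀ t j, 0 ≤ u t j) (hv : ∀ t i, 0 ≤ v t i) (t : T) :
    ∑ j, u t j + ∑ i, v t i ≤ totalMass u v :=
  single_le_sum (f := fun t => ∑ j, u t j + ∑ i, v t i)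
    (fun t _ => add_nonneg (sum_nonneg fun j _ => hu t j) (sum_nonneg fun i _ => hv t i))
    (mem_univ t)

lemma le_totalMass (hu : ∀ t j, 0 ≤ u t j) (hv : ∀ t i, 0 ≤ v t i) (t : T) (j : Fin q) :
    u t j ≤ totalMass u v :=
  calc u t j ≤ ∑ j, u t j := single_le_sum (fun j _ => hu t j) (mem_univ j)
    _ ≤ ∑ j, u t j + ∑ i, v t i := le_add_of_nonneg_right (sum_nonneg fun i _ => hv t i)
    _ ≤ totalMass u v := sum_add_sum_le_totalMass hu hv t

lemma eq_zero_of_totalMass_eq_zero (hu : ∀ t j, 0 ≤ u t j) (hv : ∀ t i, 0 ≤ v t i)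
    (h : totalMass u v = 0) (t : T) : u t = 0 ∧ v t = 0 := by
  have hsum := h ▸ sum_add_sum_le_totalMass hu hv t
  have hU : 0 ≤ ∑ j, u t j := sum_nonneg fun j _ => hu t j
  have hV : 0 ≤ ∑ i, v t i := sum_nonneg fun i _ => hv t i
  constructor
  · funext j
    exact (sum_eq_zero_iff_of_nonneg fun j _ => hu t j).mp (by linarith) j (mem_univ j)
  · funext i
    exact (sum_eq_zero_iff_of_nonneg fun i _ => hv t i).mp (by linarith) i (mem_univ i)

end Multipliers

section Directions

variable {q n r : ℕ} {T : Type} [Fintype T] {A : Matrix (Fin q) (Fin n) ℝ} {b : Fin q → ℝ}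
  {D : T → Matrix (Fin r) (Fin n) ℝ} {d : T → Fin r → ℝ} {αbar : Fin n → ℝ} {βbar : ℝ}
  {u : T → Fin q → ℝ} {v : T → Fin r → ℝ}

lemma smul_vecMul_add_smul_vecMul (c : ℝ) (x : Fin q → ℝ) (y : Fin r → ℝ)
    (B : Matrix (Fin q) (Fin n) ℝ) (E : Matrix (Fin r) (Fin n) ℝ) :
    (c • x) ᵥ* B + (c • y) ᵥ* E = c • (x ᵥ* B + y ᵥ* E) := by
  rw [smul_vecMul, smul_vecMul, smul_add]

lemma smul_dotProduct_add_smul_dotProduct (c : ℝ) (x : Fin q → ℝ) (y : Fin r → ℝ)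
    (e : Fin q → ℝ) (f : Fin r → ℝ) : (c • x) ⬝ᵥ e + (c • y) ⬝ᵥ f = c * (x ⬝ᵥ e + y ⬝ᵥ f) := by
  rw [smul_dotProduct, smul_dotProduct, smul_eq_mul, smul_eq_mul, mul_add]

lemma IsRCV.subRank_supp_eq_card {θ : ℝ} {δ : Fin q → ℝ}
    (h : IsRCV A b D d αbar βbar θ δ u v) : subRank A (supp u) = #(supp u) := by
  obtain ⟨-, -, hδ, -, -, -, -, huδ, -, hrank⟩ := h
  have hδ_one : ∀ j ∈ supp u, δ j = 1 := by
    intro j hj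
    obtain ⟨t, ht⟩ := mem_supp.mp hj
    exact (hδ j).resolve_left fun h0 => by linarith [huδ t j]
  have hcard := hrank (supp u)
  rw [sum_congr rfl hδ_one, sum_const, nsmul_one] at hcard
  exact le_antisymm (subRank_le_card A _) (by exact_mod_cast hcard)

lemma IsRCV.totalMass_pos [Nonempty T] {θ : ℝ} {δ : Fin q → ℝ}
    (h : IsRCV A b D d αbar βbar θ δ u v) (hθ : 0 < θ) (hne : ¬(αbar = 0 ∧ βbar = 0)) :
    0 < totalMass u v := by
  obtain ⟨-, -, -, hu, hv, hα, hβ, -⟩ := h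
  obtain ⟨t⟩ := ‹Nonempty T›
  refine lt_of_le_of_ne ?_ fun h0 => hne ?_
  · exact (add_nonneg (sum_nonneg fun j _ => hu t j) (sum_nonneg fun i _ => hv t i)).trans
      (sum_add_sum_le_totalMass hu hv t)
  obtain ⟨hu0, hv0⟩ := eq_zero_of_totalMass_eq_zero hu hv h0.symm t
  have hα0 := hα t
  have hβ0 := hβ t
  rw [hu0, hv0, zero_vecMul, zero_vecMul, add_zero, smul_eq_zero] at hα0
  rw [hu0, hv0, zero_dotProduct, zero_dotProduct, add_zero, mul_eq_zero] at hβ0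
  exact ⟨hα0.resolve_left hθ.ne', hβ0.resolve_left hθ.ne'⟩

theorem IsRCV.exists_isExtReg [Nonempty T] {θ : ℝ} {δ : Fin q → ℝ}
    (h : IsRCV A b D d αbar βbar θ δ u v) (hθ : 0 < θ) (hne : ¬(αbar = 0 ∧ βbar = 0)) :
    ∃ μ : ℝ, 0 < μ ∧ ∃ (u : T → Fin q → ℝ) (v : T → Fin r → ℝ),
      IsExtReg A b D d (μ • αbar) (μ * βbar) u v := by
  have hs := h.totalMass_pos hθ hne
  have hreg := h.subRank_supp_eq_card
  obtain ⟨-, -, -, hu, hv, hα, hβ, -⟩ := h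
  set s := totalMass u v
  refine ⟨s⁻¹ * θ, by positivity, s⁻¹ • u, s⁻¹ • v,
    ⟨fun t => ?_, fun t => ?_, fun t j => ?_, fun t i => ?_, ?_⟩, ?_⟩
  · rw [mul_smul, hα t]
    exact (smul_vecMul_add_smul_vecMul _ _ _ _ _).symm
  · rw [mul_assoc, hβ t]
    exact (smul_dotProduct_add_smul_dotProduct _ _ _ _ _).symm
  · exact mul_nonneg (inv_nonneg.mpr hs.le) (hu t j)
  · exact mul_nonneg (inv_nonneg.mpr hs.le) (hv t i)
  · exact (totalMass_smul _).trans (inv_mul_cancel₀ hs.ne')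
  · rwa [supp_smul u (inv_pos.mpr hs)]

theorem IsExtReg.exists_isRCV {μ : ℝ} (h : IsExtReg A b D d (μ • αbar) (μ * βbar) u v)
    (hμ : 0 < μ) :
    ∃ (θ : ℝ) (δ : Fin q → ℝ) (u : T → Fin q → ℝ) (v : T → Fin r → ℝ),
      IsRCV A b D d αbar βbar θ δ u v ∧ 0 < θ := by
  obtain ⟨⟨hα, hβ, hu, hv, hmass⟩, hreg⟩ := h
  set c := (max 1 μ)⁻¹
  have hc : 0 < c := by positivity
  have hc1 : c ≤ 1 := inv_le_one_of_one_le₀ (le_max_left 1 μ)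
  have hμc : μ * c ≤ 1 := by
    rw [← div_eq_mul_inv, div_le_one (by positivity)]
    exact le_max_right 1 μ
  have hδ : ∀ N, ∑ j ∈ N, (if j ∈ supp u then (1 : ℝ) else 0) ≤ subRank A N := by
    intro N
    rw [sum_ite_mem, sum_const, nsmul_one]
    exact_mod_cast card_inter_le_subRank A hreg N
  refine ⟨μ * c, fun j => if j ∈ supp u then 1 else 0, c • u, c • v,
    ⟨by positivity, hμc, fun j => ?_, fun t j => mul_nonneg hc.le (hu t j),
      fun t i => mul_nonneg hc.le (hv t i), fun t => ?_, fun t => ?_, fun t j => ?_,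
      (hδ univ).trans (by exact_mod_cast subRank_le_width A univ), hδ⟩, by positivity⟩
  · by_cases hj : j ∈ supp u <;> simp [hj]
  · rw [Pi.smul_apply, Pi.smul_apply, smul_vecMul_add_smul_vecMul, ← hα t, smul_smul, mul_comm]
  · rw [Pi.smul_apply, Pi.smul_apply, smul_dotProduct_add_smul_dotProduct, ← hβ t]
    ring
  · show c * u t j ≤ if j ∈ supp u then 1 else 0
    split_ifs with hj
    · exact mul_le_one₀ hc1 (hu t j) ((le_totalMass hu hv t j).trans hmass.le)
    · simp [eq_zero_of_notMem_supp hu hj t]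

end Directions

theorem stmt_8_general {q n r : ℕ} {T : Type} [Fintype T] [Nonempty T]
    (A : Matrix (Fin q) (Fin n) ℝ) (b : Fin q → ℝ)
    (D : T → Matrix (Fin r) (Fin n) ℝ) (d : T → Fin r → ℝ)
    (αbar : Fin n → ℝ) (βbar : ℝ)
    (hne : ¬ (αbar = 0 ∧ βbar = 0)) :
    (∃ (θ : ℝ) (δ : Fin q → ℝ) (u : T → Fin q → ℝ) (v : T → Fin r → ℝ),
        IsRCV A b D d αbar βbar θ δ u v ∧ 0 < θ) ↔
      (∃ μ : ℝ, 0 < μ ∧ ∃ (u : T → Fin q → ℝ) (v : T → Fin r → ℝ),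
        IsExtReg A b D d (μ • αbar) (μ * βbar) u v) := by
  constructor
  · rintro ⟨θ, δ, u, v, h, hθ⟩
    exact h.exists_isExtReg hθ hne
  · rintro ⟨μ, hμ, u, v, h⟩
    exact h.exists_isRCV hμ

/-- For `(ᾱ, β̄) ≠ (0, 0)`, there exists an RCV solution for `(ᾱ, β̄)`
with `θ > 0` if and only if some positive multiple `(μᾱ, μβ̄)` is the cut of an
extended regular CGLP solution. -/
theorem stmt_8 {q n r : ℕ} {T : Type} [Fintype T] [Nonempty T]
    (hq : 0 < q) (hn : 0 < n) (hr : 0 < r)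
    (A : Matrix (Fin q) (Fin n) ℝ) (b : Fin q → ℝ)
    (D : T → Matrix (Fin r) (Fin n) ℝ) (d : T → Fin r → ℝ)
    (αbar : Fin n → ℝ) (βbar : ℝ)
    (hne : ¬ (αbar = 0 ∧ βbar = 0)) :
    (∃ (θ : ℝ) (δ : Fin q → ℝ) (u : T → Fin q → ℝ) (v : T → Fin r → ℝ),
        IsRCV A b D d αbar βbar θ δ u v ∧ 0 < θ) ↔
      (∃ μ : ℝ, 0 < μ ∧ ∃ (u : T → Fin q → ℝ) (v : T → Fin r → ℝ),
        IsExtReg A b D d (μ • αbar) (μ * βbar) u v) :=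
  stmt_8_general A b D d αbar βbar hne
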